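/- Let (V,E) be a finite rooted directed acyclic graph in which every node is reachable from the root, and let v, w be two non-root nodes admitting immediate dominators id(v) and id(w). If v ≺ w, then either id(v) ⪯ w or id(w) ⪯ id(v). -/

import Mathlib

/-!
Dominators in a finite rooted directed acyclic graph.

We work with an edge relation `E` on a finite vertex type `V` with root `r`.
`x ⪯ y` iff there is a directed path from `y` to `x`, i.e.
`Relation.ReflTransGen E y x`.  A directed path from `a` to `b` is a nonempty
list of vertices, starting at `a`, ending at `b`, consecutive vertices joined
by edges.
-/

/-- `w` dominates `v`: `v ≺ w` and every directed path from the root `r`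
to `v` contains `w`. -/
def Dominates {V : Type*} (E : V → V → Prop) (r w v : V) : Prop :=
  (Relation.ReflTransGen E w v ∧ v ≠ w) ∧
  ∀ l : List V, l.Chain' E → l.head? = some r → l.getLast? = some v → w ∈ l

/-- `w` is the immediate dominator of `v`: it dominates `v` and satisfies
`w ⪯ w'` for every dominator `w'` of `v`. -/
def IsIdom {V : Type*} (E : V → V → Prop) (r w v : V) : Prop :=
  Dominates E r w v ∧ ∀ w' : V, Dominates E r w' v → Relation.ReflTransGen E w' w

section Helpers
open List

private lemma chain_rtg {V : Type*} {E : V → V → Prop} {a b : V}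
    (l : List V) (hc : l.Chain' E) (hh : l.head? = some a) (hl : l.getLast? = some b) :
    Relation.ReflTransGen E a b := by
  rcases l with _ | ⟨x, t⟩
  · simp at hh
  · simp only [head?_cons, Option.some.injEq] at hh
    subst hh
    rw [getLast?_eq_getLast (cons_ne_nil _ _), Option.some.injEq] at hl
    exact relationReflTransGen_of_exists_isChain_cons t hc hl

private lemma rtg_chain {V : Type*} {E : V → V → Prop} {a b : V}
    (h : Relation.ReflTransGen E a b) :
    ∃ l : List V, l.Chain' E ∧ l.head? = some a ∧ l.getLast? = some b := by
  obtain ⟨l, hl1, hl2⟩ := exists_isChain_cons_of_relationReflTransGen h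
  exact ⟨a :: l, hl1, rfl, by rw [getLast?_eq_getLast (cons_ne_nil _ _), hl2]⟩

private lemma mem_rtg {V : Type*} {E : V → V → Prop} {a b x : V}
    (l : List V) (hc : l.Chain' E) (hh : l.head? = some a) (hl : l.getLast? = some b)
    (hx : x ∈ l) : Relation.ReflTransGen E a x ∧ Relation.ReflTransGen E x b := by
  obtain ⟨s, t, rfl⟩ := List.append_of_mem hx
  constructor
  · refine chain_rtg (s ++ [x]) (hc.prefix ⟨t, by simp⟩) ?_ (by simp)
    rcases s with _ | ⟨y, s⟩
    · simpa using hh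
    · simpa using hh
  · refine chain_rtg (x :: t) (hc.suffix ⟨s, rfl⟩) rfl ?_
    rwa [List.getLast?_append_cons] at hl

private lemma glue_path {V : Type*} {E : V → V → Prop} {w v : V}
    (p q : List V) (hp : p.Chain' E) (hq : q.Chain' E)
    (hpl : p.getLast? = some w) (hqh : q.head? = some w) (hql : q.getLast? = some v)
    (hne : v ≠ w) :
    (p ++ q.tail).Chain' E ∧ (p ++ q.tail).head? = p.head? ∧
      (p ++ q.tail).getLast? = some v := by
  rcases q with _ | ⟨x, qt⟩
  · simp at hqh
  · simp only [head?_cons, Option.some.injEq] at hqh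
    subst hqh
    have hqt : qt ≠ [] := by
      rintro rfl
      simp only [getLast?_singleton, Option.some.injEq] at hql
      exact hne hql.symm
    have hpn : p ≠ [] := by rintro rfl; simp at hpl
    refine ⟨hp.append hq.tail ?_, ?_, ?_⟩
    · intro a ha b hb
      rw [hpl, Option.mem_some_iff] at ha
      subst ha
      exact (List.isChain_cons.1 hq).1 b hb
    · exact List.head?_append_of_ne_nil _ hpn
    · rw [show (x :: qt).tail = qt from rfl,
        List.getLast?_append_of_ne_nil _ hqt]
      rcases qt with _ | ⟨y, t⟩
      · exact absurd rfl hqt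
      · rwa [List.getLast?_cons_cons] at hql

end Helpers

/-- In a finite rooted DAG in which every node is reachable
from the root, if `v`, `w` are non-root nodes with immediate dominators
`id v = iv` and `id w = iw`, and `v ≺ w`, then `id v ⪯ w` or `id w ⪯ id v`. -/
theorem idom_of_lt {V : Type*} [Fintype V] (E : V → V → Prop) (r : V)
    (hreach : ∀ v : V, Relation.ReflTransGen E r v)
    (hacyc : ∀ v : V, ¬ Relation.TransGen E v v)
    (v w iv iw : V) (hv : v ≠ r) (hw : w ≠ r)
    (hiv : IsIdom E r iv v) (hiw : IsIdom E r iw w)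
    (hvw : Relation.ReflTransGen E w v ∧ v ≠ w) :
    Relation.ReflTransGen E w iv ∨ Relation.ReflTransGen E iv iw := by
  by_cases h : Relation.ReflTransGen E w iv
  · exact Or.inl h
  right
  apply hiw.2 iv
  obtain ⟨q, hqc, hqh, hql⟩ := rtg_chain hvw.1
  have key : ∀ p : List V, p.Chain' E → p.head? = some r → p.getLast? = some w → iv ∈ p := by
    intro p hpc hph hpl
    obtain ⟨hc, hh, hl⟩ := glue_path p q hpc hqc hpl hqh hql hvw.2
    have hm : iv ∈ p ++ q.tail := hiv.1.2 _ hc (hh.trans hph) hl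
    rcases List.mem_append.1 hm with h1 | h1
    · exact h1
    · exact absurd ((mem_rtg q hqc hqh hql (List.mem_of_mem_tail h1)).1) h
  refine ⟨⟨?_, ?_⟩, key⟩
  · obtain ⟨p, hpc, hph, hpl⟩ := rtg_chain (hreach w)
    exact (mem_rtg p hpc hph hpl (key p hpc hph hpl)).2
  · rintro rfl; exact h Relation.ReflTransGen.refl
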